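/- arXiv:2305.04104 — 2 statements merged into one kernel-verified Lean document; each statement's English description precedes it below -/
import Mathlib

section
/- For every c ∈ ℝ, the sublevel set {(p,θ) ∈ X_p × ℝ : 𝒱_nav(p,θ) ≤ c} is compact. -/
open Real Filter
open scoped RealInnerProductSpace Topology Matrix

noncomputable section

/-- The Euclidean plane. -/
abbrev E2 : Type := EuclideanSpace ℝ (Fin 2)

/-- The planar rotation matrix `R(θ)`. -/
def RotM (θ : ℝ) : Matrix (Fin 2) (Fin 2) ℝ :=
  !![Real.cos θ, -Real.sin θ; Real.sin θ, Real.cos θ]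

/-- The matrix `Δ = [[0,-1],[1,0]]`. -/
def DeltaM : Matrix (Fin 2) (Fin 2) ℝ := !![0, -1; 1, 0]

/-- Reinterpret a plain vector as a point of the Euclidean plane. -/
def toE2 (v : Fin 2 → ℝ) : E2 := (WithLp.equiv 2 (Fin 2 → ℝ)).symm v

/-- Reinterpret a point of the Euclidean plane as a plain vector. -/
def fromE2 (p : E2) : Fin 2 → ℝ := WithLp.equiv 2 (Fin 2 → ℝ) p

/-- A `2×2` matrix acting on a point of the Euclidean plane. -/
def mulV (M : Matrix (Fin 2) (Fin 2) ℝ) (p : E2) : E2 := toE2 (M.mulVec (fromE2 p))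

/-- The barrier function `φ`. -/
def phi (rs z : ℝ) : ℝ := if z ≤ rs then (z - rs) ^ 2 * Real.log (rs / z) else 0

/-- The derivative `φ'` of the barrier function. -/
def phi' (rs z : ℝ) : ℝ :=
  if z ≤ rs then 2 * (z - rs) * Real.log (rs / z) - (z - rs) ^ 2 / z else 0

/-- Distance to the obstacle, `d_o(p) = ‖p - p_o‖ - r_o`. -/
def dO (po : E2) (ro : ℝ) (p : E2) : ℝ := ‖p - po‖ - ro

/-- The free space `X_p = {p : ‖p - p_o‖ ≥ r_o + ε}`. -/
def Xp (po : E2) (ro ε : ℝ) : Set E2 := {p | ro + ε ≤ ‖p - po‖}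

/-- The navigation function `V_nav`. -/
def Vnav (po pd : E2) (ro ϱ rs : ℝ) (p : E2) : ℝ :=
  (1 / 2) * ‖p - pd‖ ^ 2 + ϱ * phi rs (dO po ro p)

/-- The gradient `∇V_nav(p) = p - p_d + ϱ φ'(d_o(p)) (p - p_o)/‖p - p_o‖`. -/
def gradVnav (po pd : E2) (ro ϱ rs : ℝ) (p : E2) : E2 :=
  (p - pd) + ((ϱ * phi' rs (dO po ro p)) / ‖p - po‖) • (p - po)

/-- The transformation `T(p,θ) = p_o + R(θ)(p - p_o)`. -/
def Tmap (po : E2) (p : E2) (θ : ℝ) : E2 := po + mulV (RotM θ) (p - po)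

/-- The modified navigation function `𝒱_nav`. -/
def Vnav2 (po pd : E2) (ro ϱ rs γθ : ℝ) (p : E2) (θ : ℝ) : ℝ :=
  (1 / 2) * ‖Tmap po p θ - pd‖ ^ 2 + ϱ * phi rs (dO po ro p) + (γθ / 2) * θ ^ 2

/-- The map `σ(θ) = (I₂ - R(θ))ᵀ (p_o - p_d)`. -/
def sigmaFn (po pd : E2) (θ : ℝ) : E2 := mulV ((1 - RotM θ)ᵀ) (po - pd)

lemma normSq (x : E2) : ‖x‖ ^ 2 = x 0 ^ 2 + x 1 ^ 2 := by
  rw [EuclideanSpace.norm_eq, Real.sq_sqrt (by positivity)]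
  simp [Fin.sum_univ_two, sq_abs]

lemma mulV_rot_apply0 (θ : ℝ) (p : E2) :
    mulV (RotM θ) p 0 = Real.cos θ * p 0 - Real.sin θ * p 1 := by
  simp [mulV, toE2, fromE2, RotM, Matrix.mulVec, dotProduct, Fin.sum_univ_two]
  ring

lemma mulV_rot_apply1 (θ : ℝ) (p : E2) :
    mulV (RotM θ) p 1 = Real.sin θ * p 0 + Real.cos θ * p 1 := by
  simp [mulV, toE2, fromE2, RotM, Matrix.mulVec, dotProduct, Fin.sum_univ_two]

lemma mulV_rot_norm (θ : ℝ) (q : E2) : ‖mulV (RotM θ) q‖ = ‖q‖ := by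
  rw [← Real.sqrt_sq (norm_nonneg (mulV (RotM θ) q)), ← Real.sqrt_sq (norm_nonneg q)]
  rw [normSq, normSq, mulV_rot_apply0, mulV_rot_apply1]
  congr 1
  nlinarith [sin_sq_add_cos_sq θ]

lemma phi_nonneg {rs z : ℝ} (hz : 0 < z) : 0 ≤ phi rs z := by
  unfold phi
  split_ifs with h
  · apply mul_nonneg (sq_nonneg _)
    apply Real.log_nonneg
    rw [le_div_iff₀ hz]
    linarith
  · exact le_refl 0

lemma phi_eq_min {rs : ℝ} (hrs : 0 < rs) {z : ℝ} (hz : 0 < z) :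
    phi rs z = (min z rs - rs) ^ 2 * Real.log (rs / min z rs) := by
  unfold phi
  split_ifs with h
  · rw [min_eq_left h]
  · rw [min_eq_right (le_of_not_ge h)]
    simp


/-- Every sublevel set `{(p,θ) ∈ X_p × ℝ : 𝒱_nav(p,θ) ≤ c}` is compact. -/
theorem statement_12 (po pd : E2) (ro ε ϱ rs γθ : ℝ)
    (hro : 0 < ro) (hε : 0 < ε) (hϱ : 0 < ϱ) (hγθ : 0 < γθ)
    (hpd : pd ∈ Xp po ro ε) (hrs_lb : ε < rs) (hrs_ub : rs < dO po ro pd) (c : ℝ) :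
    IsCompact {q : E2 × ℝ | q.1 ∈ Xp po ro ε ∧ Vnav2 po pd ro ϱ rs γθ q.1 q.2 ≤ c} := by
  have hrs : 0 < rs := hε.trans hrs_lb
  set S := {q : E2 × ℝ | q.1 ∈ Xp po ro ε ∧ Vnav2 po pd ro ϱ rs γθ q.1 q.2 ≤ c} with hS
  -- positivity of dO on Xp
  have hdpos : ∀ p : E2, p ∈ Xp po ro ε → 0 < dO po ro p := by
    intro p hp
    have : ro + ε ≤ ‖p - po‖ := hp
    unfold dO
    linarith
  apply Metric.isCompact_of_isClosed_isBounded
  · -- closedness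
    have hK : IsClosed (Xp po ro ε ×ˢ (Set.univ : Set ℝ)) := by
      apply IsClosed.prod _ isClosed_univ
      exact isClosed_le continuous_const ((continuous_id.sub continuous_const).norm)
    have hproj : ∀ i : Fin 2, Continuous fun p : E2 => p i := fun i =>
      (EuclideanSpace.proj i : E2 →L[ℝ] ℝ).continuous
    have hcont1 : Continuous fun q : E2 × ℝ => ‖Tmap po q.1 q.2 - pd‖ ^ 2 := by
      have heq : (fun q : E2 × ℝ => ‖Tmap po q.1 q.2 - pd‖ ^ 2) = fun q =>
          (po 0 + (Real.cos q.2 * (q.1 0 - po 0) - Real.sin q.2 * (q.1 1 - po 1)) - pd 0) ^ 2 +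
          (po 1 + (Real.sin q.2 * (q.1 0 - po 0) + Real.cos q.2 * (q.1 1 - po 1)) - pd 1) ^ 2 := by
        funext q
        rw [normSq]
        simp [Tmap, mulV_rot_apply0, mulV_rot_apply1]
      rw [heq]
      have h0 : Continuous fun q : E2 × ℝ => q.1 0 := (hproj 0).comp continuous_fst
      have h1 : Continuous fun q : E2 × ℝ => q.1 1 := (hproj 1).comp continuous_fst
      fun_prop
    have hdc : Continuous fun q : E2 × ℝ => dO po ro q.1 := by
      unfold dO
      fun_prop
    have hg : ContinuousOn (fun z => (min z rs - rs) ^ 2 * Real.log (rs / min z rs))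
        {z : ℝ | 0 < z} := by
      apply ContinuousOn.mul (by fun_prop)
      apply ContinuousOn.log
      · exact continuousOn_const.div (by fun_prop)
          (fun z hz => ne_of_gt (lt_min hz hrs))
      · intro z hz
        have : 0 < min z rs := lt_min hz hrs
        positivity
    have hcont2 : ContinuousOn (fun q : E2 × ℝ => phi rs (dO po ro q.1))
        (Xp po ro ε ×ˢ (Set.univ : Set ℝ)) := by
      have hmaps : Set.MapsTo (fun q : E2 × ℝ => dO po ro q.1)
          (Xp po ro ε ×ˢ (Set.univ : Set ℝ)) {z : ℝ | 0 < z} := by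
        intro q hq
        exact hdpos q.1 hq.1
      apply (hg.comp hdc.continuousOn hmaps).congr
      intro q hq
      exact phi_eq_min hrs (hdpos q.1 hq.1)
    have hcontV : ContinuousOn (fun q : E2 × ℝ => Vnav2 po pd ro ϱ rs γθ q.1 q.2)
        (Xp po ro ε ×ˢ (Set.univ : Set ℝ)) := by
      unfold Vnav2
      apply ContinuousOn.add
      apply ContinuousOn.add
      · exact (continuous_const.mul hcont1).continuousOn
      · exact continuousOn_const.mul hcont2
      · fun_prop
    have : S = (Xp po ro ε ×ˢ (Set.univ : Set ℝ)) ∩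
        ((fun q : E2 × ℝ => Vnav2 po pd ro ϱ rs γθ q.1 q.2) ⁻¹' Set.Iic c) := by
      ext q
      simp [hS, Set.mem_prod, and_comm]
    rw [this]
    exact hcontV.preimage_isClosed_of_isClosed hK isClosed_Iic
  · -- boundedness
    have hsub : S ⊆ Metric.closedBall po (Real.sqrt (2 * c) + ‖pd - po‖) ×ˢ
        Metric.closedBall (0 : ℝ) (Real.sqrt (2 * c / γθ)) := by
      rintro ⟨p, θ⟩ ⟨hp, hV⟩
      have hphi : 0 ≤ ϱ * phi rs (dO po ro p) :=
        mul_nonneg hϱ.le (phi_nonneg (hdpos p hp))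
      have h1 : ‖Tmap po p θ - pd‖ ^ 2 ≤ 2 * c := by
        have := sq_nonneg θ
        unfold Vnav2 at hV
        nlinarith
      have h3 : θ ^ 2 ≤ 2 * c / γθ := by
        have := sq_nonneg ‖Tmap po p θ - pd‖
        unfold Vnav2 at hV
        rw [le_div_iff₀ hγθ]
        nlinarith
      constructor
      · simp only [Metric.mem_closedBall, dist_eq_norm]
        have hTn : ‖Tmap po p θ - pd‖ ≤ Real.sqrt (2 * c) := by
          rw [← Real.sqrt_sq (norm_nonneg _)]
          exact Real.sqrt_le_sqrt h1
        have hppo : ‖p - po‖ = ‖Tmap po p θ - po‖ := by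
          have : Tmap po p θ - po = mulV (RotM θ) (p - po) := by
            unfold Tmap; abel
          rw [this, mulV_rot_norm]
        calc ‖p - po‖ = ‖Tmap po p θ - po‖ := hppo
          _ ≤ ‖Tmap po p θ - pd‖ + ‖pd - po‖ := by
              have := norm_sub_le_norm_sub_add_norm_sub (Tmap po p θ) pd po
              linarith [norm_sub_le (Tmap po p θ - pd) (po - pd)]
          _ ≤ Real.sqrt (2 * c) + ‖pd - po‖ := by linarith
      · simp only [Metric.mem_closedBall, Real.dist_eq, sub_zero]
        rw [← Real.sqrt_sq_eq_abs]
        exact Real.sqrt_le_sqrt h3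
    exact (Metric.isBounded_closedBall.prod Metric.isBounded_closedBall).subset hsub
end
end

section
/- Suppose p ∈ ℝ² with ‖p − p_o‖ > r_o satisfies ⟨p − p_o, p_o − p_d⟩ = ‖p − p_o‖·‖p_o − p_d‖. Then for every θ̄ ∈ ℝ, 𝒱_nav(p,0) − 𝒱_nav(p,θ̄) = ‖p − p_o‖·‖p_o − p_d‖·(1 − cos θ̄) − (γ_θ/2)·θ̄². -/
open Real Filter
open scoped RealInnerProductSpace Topology Matrix

noncomputable section

/-!
With `v = p - p_o` and `w = p_o - p_d` we have `T(p,θ) - p_d = R(θ) v + w`, hence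
`‖T(p,θ) - p_d‖² = ‖v‖² + ‖w‖² + 2 (cos θ ⟪v, w⟫ + sin θ (v × w))`. Lagrange's identity
`(v × w)² + ⟪v, w⟫² = ‖v‖² ‖w‖²` shows that equality in Cauchy–Schwarz kills the cross product,
and the barrier term does not depend on `θ`.
-/

def planeCross (v w : E2) : ℝ := v 0 * w 1 - v 1 * w 0

theorem mulV_RotM_apply_zero (θ : ℝ) (v : E2) :
    mulV (RotM θ) v 0 = Real.cos θ * v 0 - Real.sin θ * v 1 := by
  simp [mulV, toE2, fromE2, RotM, dotProduct, Fin.sum_univ_two]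
  ring

theorem mulV_RotM_apply_one (θ : ℝ) (v : E2) :
    mulV (RotM θ) v 1 = Real.sin θ * v 0 + Real.cos θ * v 1 := by
  simp [mulV, toE2, fromE2, RotM, dotProduct, Fin.sum_univ_two]

theorem E2.inner_eq (v w : E2) : ⟪v, w⟫ = v 0 * w 0 + v 1 * w 1 := by
  simp [PiLp.inner_apply, Fin.sum_univ_two, mul_comm]

theorem E2.norm_sq_eq (v : E2) : ‖v‖ ^ 2 = v 0 ^ 2 + v 1 ^ 2 := by
  rw [← real_inner_self_eq_norm_sq, E2.inner_eq]; ring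

theorem planeCross_sq_add_inner_sq (v w : E2) :
    planeCross v w ^ 2 + ⟪v, w⟫ ^ 2 = ‖v‖ ^ 2 * ‖w‖ ^ 2 := by
  rw [planeCross, E2.inner_eq, E2.norm_sq_eq, E2.norm_sq_eq]; ring

theorem planeCross_eq_zero_of_inner_eq_norm_mul {v w : E2} (h : ⟪v, w⟫ = ‖v‖ * ‖w‖) :
    planeCross v w = 0 := by
  have := planeCross_sq_add_inner_sq v w
  rw [h] at this
  exact pow_eq_zero_iff two_ne_zero |>.mp (by linarith)

theorem norm_mulV_RotM (θ : ℝ) (v : E2) : ‖mulV (RotM θ) v‖ = ‖v‖ := by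
  refine (sq_eq_sq₀ (norm_nonneg _) (norm_nonneg _)).mp ?_
  rw [E2.norm_sq_eq, E2.norm_sq_eq, mulV_RotM_apply_zero, mulV_RotM_apply_one]
  linear_combination (v 0 ^ 2 + v 1 ^ 2) * Real.sin_sq_add_cos_sq θ

theorem inner_mulV_RotM (θ : ℝ) (v w : E2) :
    ⟪mulV (RotM θ) v, w⟫ = Real.cos θ * ⟪v, w⟫ + Real.sin θ * planeCross v w := by
  rw [E2.inner_eq, E2.inner_eq, mulV_RotM_apply_zero, mulV_RotM_apply_one, planeCross]; ring

theorem norm_Tmap_sub_sq (po pd p : E2) (θ : ℝ) :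
    ‖Tmap po p θ - pd‖ ^ 2 = ‖p - po‖ ^ 2 + ‖po - pd‖ ^ 2
      + 2 * (Real.cos θ * ⟪p - po, po - pd⟫ + Real.sin θ * planeCross (p - po) (po - pd)) := by
  have hdecomp : Tmap po p θ - pd = mulV (RotM θ) (p - po) + (po - pd) := by
    rw [Tmap]; abel
  rw [hdecomp, norm_add_sq_real, norm_mulV_RotM, inner_mulV_RotM]; ring

theorem statement_15_general (po pd : E2) (ro ϱ rs γθ : ℝ)
    (p : E2) (h : ⟪p - po, po - pd⟫ = ‖p - po‖ * ‖po - pd‖) (θb : ℝ) :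
    Vnav2 po pd ro ϱ rs γθ p 0 - Vnav2 po pd ro ϱ rs γθ p θb
      = ‖p - po‖ * ‖po - pd‖ * (1 - Real.cos θb) - (γθ / 2) * θb ^ 2 := by
  have hcross := planeCross_eq_zero_of_inner_eq_norm_mul h
  simp only [Vnav2, norm_Tmap_sub_sq, hcross, h, Real.cos_zero, Real.sin_zero]
  ring

/-- If `‖p - p_o‖ > r_o` and `⟨p - p_o, p_o - p_d⟩ = ‖p - p_o‖ ‖p_o - p_d‖`,
then for every `θ̄`,
`𝒱_nav(p,0) - 𝒱_nav(p,θ̄) = ‖p - p_o‖ ‖p_o - p_d‖ (1 - cos θ̄) - (γ_θ/2) θ̄²`. -/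
theorem statement_15 (po pd : E2) (ro ϱ rs γθ : ℝ)
    (hro : 0 < ro) (hϱ : 0 < ϱ) (hrs : 0 < rs) (hγθ : 0 < γθ)
    (p : E2) (hp : ro < ‖p - po‖)
    (h : ⟪p - po, po - pd⟫ = ‖p - po‖ * ‖po - pd‖) (θb : ℝ) :
    Vnav2 po pd ro ϱ rs γθ p 0 - Vnav2 po pd ro ϱ rs γθ p θb
      = ‖p - po‖ * ‖po - pd‖ * (1 - Real.cos θb) - (γθ / 2) * θb ^ 2 :=
  statement_15_general po pd ro ϱ rs γθ p h θb
end
end
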